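/- If (𝒴, 𝒦) is a supercharacter theory of a finite group G and X ∈ 𝒴, then X is good, i.e., X is a member of the filtration ℱ({X}). -/

import Mathlib

open scoped Classical

/-- The set of irreducible characters of `G` over `ℂ`. -/
noncomputable def Irr (G : Type) [Group G] [Fintype G] : Set (G → ℂ) :=
  {χ | ∃ V : FDRep ℂ G, CategoryTheory.Simple V ∧ χ = V.character}

/-- The trivial character. -/
noncomputable def triv (G : Type) [Group G] [Fintype G] : G → ℂ := fun _ => 1

/-- The Wedderburn sum `σ_X = ∑_{χ ∈ X} χ(1)·χ`. -/
noncomputable def wsum {G : Type} [Group G] [Fintype G] (X : Set (G → ℂ)) : G → ℂ :=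
  fun g => ∑ᶠ χ ∈ X, χ 1 * χ g

/-- `P` is a partition of the set `S`. -/
def IsPartitionOf {α : Type*} (S : Set α) (P : Set (Set α)) : Prop :=
  (∀ p ∈ P, p.Nonempty ∧ p ⊆ S) ∧ ∀ a ∈ S, ∃! p, p ∈ P ∧ a ∈ p

/-- A partial partition of `Irr G`: nonempty pairwise disjoint subsets of `Irr G`. -/
def IsPartialPartition (G : Type) [Group G] [Fintype G] (P : Set (Set (G → ℂ))) : Prop :=
  (∀ p ∈ P, p.Nonempty ∧ p ⊆ Irr G) ∧ ∀ p ∈ P, ∀ q ∈ P, p ≠ q → p ∩ q = ∅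

/-- A supercharacter theory of `G` in the sense of Diaconis–Isaacs: `Y` partitions
`Irr G`, `K` partitions `G` with `{1} ∈ K`, `|Y| = |K|`, and every Wedderburn sum
`σ_X`, `X ∈ Y`, is constant on every member of `K`. -/
def IsSCT (G : Type) [Group G] [Fintype G] (Y : Set (Set (G → ℂ))) (K : Set (Set G)) : Prop :=
  IsPartitionOf (Irr G) Y ∧ IsPartitionOf (Set.univ : Set G) K ∧
    ({(1 : G)} : Set G) ∈ K ∧ Y.ncard = K.ncard ∧
    ∀ X ∈ Y, ∀ k ∈ K, ∀ g ∈ k, ∀ h ∈ k, wsum X g = wsum X h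

/-- The coefficient of `χ(1)·χ` in the expansion of the class function `a` in the
orthogonal basis `{φ(1)·φ : φ ∈ Irr G}` of `cf(G)`. -/
noncomputable def coeff {G : Type} [Group G] [Fintype G] (χ a : G → ℂ) : ℂ :=
  (∑ g : G, starRingEnd ℂ (χ g) * a g) / ((Fintype.card G : ℂ) * χ 1)

/-- The (non-unital) subalgebra of `cf(G)` generated by the Wedderburn sums of `𝒳`. -/
noncomputable def wAlg (G : Type) [Group G] [Fintype G] (𝒳 : Set (Set (G → ℂ))) :
    NonUnitalSubalgebra ℂ (G → ℂ) :=
  NonUnitalAlgebra.adjoin ℂ {s | ∃ X ∈ 𝒳, s = wsum X}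

/-- The equivalence relation defining the filtration `ℱ(𝒳)`: `χ ∼ ψ` iff the
coefficients of `χ(1)χ` and `ψ(1)ψ` agree in every element of the algebra `𝒜`. -/
def frel (G : Type) [Group G] [Fintype G] (𝒳 : Set (Set (G → ℂ))) (χ ψ : G → ℂ) : Prop :=
  ∀ a ∈ wAlg G 𝒳, coeff χ a = coeff ψ a

/-- The filtration `ℱ(𝒳)`: the partition of `Irr G` into equivalence classes of `frel`. -/
def Filt (G : Type) [Group G] [Fintype G] (𝒳 : Set (Set (G → ℂ))) : Set (Set (G → ℂ)) :=
  {C | ∃ χ ∈ Irr G, C = {ψ ∈ Irr G | frel G 𝒳 χ ψ}}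


/-!
The Wedderburn sums `σ_Z`, `Z ∈ 𝒴`, are linearly independent, because orthogonality of
irreducible characters gives `coeff χ σ_Z = [χ ∈ Z]`. They lie in the space of functions constant
on the superclasses, whose dimension is at most `|𝒦| = |𝒴|`, so they span it. That space is closed
under multiplication, hence contains the algebra generated by `σ_X`, and every element of this
algebra is a linear combination of the `σ_Z`: its coefficients are constant on each `Z ∈ 𝒴`, in
particular on `X`. Conversely `σ_X` itself separates `X` from the other irreducible characters.
-/

open Module End

section FiniteOrderTrace

variable {K V : Type*} [Field K] [AddCommGroup V] [Module K V]

lemma LinearMap.trace_eq_sum_of_basis_eigen {ι : Type*} [Fintype ι] [DecidableEq ι]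
    (v : Basis ι K V) (μ : ι → K) {f : End K V} (hf : ∀ i, f (v i) = μ i • v i) :
    LinearMap.trace K V f = ∑ i, μ i := by
  rw [LinearMap.trace_eq_matrix_trace K v, Matrix.trace]
  simp [LinearMap.toMatrix_apply, hf]

lemma Module.End.IsSemisimple.exists_basis_eigen [IsAlgClosed K] [FiniteDimensional K V]
    {f : End K V} (hf : f.IsSemisimple) :
    ∃ (n : ℕ) (v : Basis (Fin n) K V) (μ : Fin n → K), ∀ i, f (v i) = μ i • v i := by
  classical
  have hint := DirectSum.isInternal_submodule_of_iSupIndep_of_iSup_eq_top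
    f.eigenspaces_iSupIndep hf.iSup_eigenspace_eq_top
  let b := hint.collectedBasis fun μ ↦ Module.finBasis K (f.eigenspace μ)
  have : Fintype ((ν : K) × Fin (finrank K (f.eigenspace ν))) :=
    FiniteDimensional.fintypeBasisIndex b
  let e := Fintype.equivFin ((ν : K) × Fin (finrank K (f.eigenspace ν)))
  refine ⟨_, b.reindex e, fun i ↦ (e.symm i).1, fun i ↦ ?_⟩
  rw [Basis.reindex_apply]
  exact mem_eigenspace_iff.mp (hint.collectedBasis_mem _ _)

lemma Module.End.isSemisimple_of_pow_eq_one [CharZero K] {f : End K V} {k : ℕ} (hk : k ≠ 0)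
    (hf : f ^ k = 1) : f.IsSemisimple := by
  refine isSemisimple_of_squarefree_aeval_eq_zero
    (Polynomial.separable_X_pow_sub_C 1 (Nat.cast_ne_zero.mpr hk) one_ne_zero).squarefree ?_
  simp [hf]

end FiniteOrderTrace

/-- The eigenvalues of an endomorphism of finite order are roots of unity, whose inverses are
their conjugates. -/
lemma LinearMap.trace_eq_conj_trace_of_mul_eq_one {V : Type*} [AddCommGroup V] [Module ℂ V]
    [FiniteDimensional ℂ V] {f g : End ℂ V} (hgf : g * f = 1) {k : ℕ} (hk : k ≠ 0)
    (hf : f ^ k = 1) :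
    LinearMap.trace ℂ V g = starRingEnd ℂ (LinearMap.trace ℂ V f) := by
  classical
  obtain ⟨n, v, μ, hv⟩ := (isSemisimple_of_pow_eq_one hk hf).exists_basis_eigen
  have hroot (i : Fin n) : μ i ^ k = 1 := by
    have hev : f.HasEigenvector (μ i) (v i) := ⟨mem_eigenspace_iff.mpr (hv i), v.ne_zero i⟩
    have h := hev.pow_apply k
    rw [hf, one_apply] at h
    exact smul_left_injective ℂ (v.ne_zero i) (by simpa using h.symm)
  have hgv (i : Fin n) : g (v i) = (μ i)⁻¹ • v i := by
    have hμ : μ i ≠ 0 := by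
      rintro h0; simpa [h0, zero_pow hk] using hroot i
    have h := congrArg (fun w ↦ (μ i)⁻¹ • w) (congrArg (· (v i)) hgf)
    simpa [hv, inv_smul_smul₀ hμ] using h
  rw [trace_eq_sum_of_basis_eigen v _ hgv, trace_eq_sum_of_basis_eigen v μ hv, map_sum]
  exact Finset.sum_congr rfl fun i _ ↦
    Complex.inv_eq_conj (Complex.norm_eq_one_of_pow_eq_one (hroot i) hk)

section Characters

variable {G : Type} [Group G] [Fintype G]

lemma FDRep.char_inv (V : FDRep ℂ G) (g : G) :
    V.character g⁻¹ = starRingEnd ℂ (V.character g) :=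
  LinearMap.trace_eq_conj_trace_of_mul_eq_one (k := Fintype.card G)
    (by rw [← map_mul, inv_mul_cancel, map_one]) Fintype.card_ne_zero
    (by rw [← map_pow, pow_card_eq_one, map_one])

lemma sum_conj_mul_of_mem_Irr {χ ψ : G → ℂ} (hχ : χ ∈ Irr G) (hψ : ψ ∈ Irr G) :
    ∑ g, starRingEnd ℂ (χ g) * ψ g = if χ = ψ then (Fintype.card G : ℂ) else 0 := by
  obtain ⟨V, hV, rfl⟩ := hχ
  obtain ⟨W, hW, rfl⟩ := hψ
  have hG : (Nat.card G : ℂ) ≠ 0 := Nat.cast_ne_zero.mpr Nat.card_pos.ne'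
  let := invertibleOfNonzero hG
  have horth (A B : FDRep ℂ G) [CategoryTheory.Simple A] [CategoryTheory.Simple B] :
      ∑ g, starRingEnd ℂ (A.character g) * B.character g =
        if Nonempty (A ≅ B) then (Fintype.card G : ℂ) else 0 := by
    have h := FDRep.char_orthonormal A B
    rw [inv_mul_eq_iff_eq_mul₀ hG, Nat.card_eq_fintype_card] at h
    simp only [← FDRep.char_inv]
    rw [← Equiv.sum_comp (Equiv.inv G)]
    simpa using h
  by_cases h : V.character = W.character
  · rw [if_pos h, ← h, horth V V, if_pos ⟨CategoryTheory.Iso.refl V⟩]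
  · rw [if_neg h, horth V W, if_neg fun ⟨i⟩ ↦ h (FDRep.char_iso i)]

lemma apply_one_ne_zero_of_mem_Irr {χ : G → ℂ} (hχ : χ ∈ Irr G) : χ 1 ≠ 0 := by
  intro h0
  have horth := sum_conj_mul_of_mem_Irr hχ hχ
  obtain ⟨V, -, rfl⟩ := hχ
  have : Subsingleton V := Module.finrank_zero_iff.mp (by exact_mod_cast (FDRep.char_one V) ▸ h0)
  have hzero (g : G) : V.character g = 0 := by
    simp [FDRep.character, Subsingleton.elim (V.ρ g) 0]
  simp only [hzero, map_zero, mul_zero, Finset.sum_const_zero, if_true] at horth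
  exact (Nat.cast_ne_zero.mpr Fintype.card_ne_zero) horth.symm

end Characters

lemma LinearIndependent.of_pairing {R M ι : Type*} [Field R] [AddCommGroup M] [Module R M]
    {v : ι → M} (L : ι → M →ₗ[R] R) (hdiag : ∀ i, L i (v i) ≠ 0)
    (hoff : ∀ i j, i ≠ j → L i (v j) = 0) : LinearIndependent R v := by
  rw [linearIndependent_iff']
  intro s c hsum i hi
  have h := congrArg (L i) hsum
  simp only [map_sum, map_smul, smul_eq_mul, map_zero] at h
  rw [Finset.sum_eq_single i (fun j _ hji ↦ by rw [hoff i j hji.symm, mul_zero])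
    (fun hi' ↦ absurd hi hi')] at h
  exact (mul_eq_zero.mp h).resolve_right (hdiag i)

/-- `|G|` times the inner product `[a, χ]`. -/
noncomputable def charPairing {G : Type*} [Fintype G] (χ : G → ℂ) : (G → ℂ) →ₗ[ℂ] ℂ :=
  ∑ g, starRingEnd ℂ (χ g) • LinearMap.proj g

lemma charPairing_apply {G : Type*} [Fintype G] (χ a : G → ℂ) :
    charPairing χ a = ∑ g, starRingEnd ℂ (χ g) * a g := by
  simp [charPairing]

section Coefficients

variable {G : Type} [Group G] [Fintype G]

lemma charPairing_of_mem_Irr {χ ψ : G → ℂ} (hχ : χ ∈ Irr G) (hψ : ψ ∈ Irr G) :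
    charPairing χ ψ = if χ = ψ then (Fintype.card G : ℂ) else 0 := by
  rw [charPairing_apply, sum_conj_mul_of_mem_Irr hχ hψ]

lemma linearIndependent_Irr : LinearIndependent ℂ ((↑) : Irr G → G → ℂ) :=
  .of_pairing (fun χ ↦ charPairing χ)
    (fun χ ↦ by simp [charPairing_of_mem_Irr χ.2 χ.2, Fintype.card_ne_zero])
    (fun χ ψ h ↦ by rw [charPairing_of_mem_Irr χ.2 ψ.2, if_neg (Subtype.coe_ne_coe.mpr h)])

lemma finite_Irr : (Irr G).Finite :=
  linearIndependent_Irr.setFinite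

lemma wsum_eq_sum {Z : Set (G → ℂ)} (hZ : Z.Finite) : wsum Z = ∑ φ ∈ hZ.toFinset, φ 1 • φ := by
  ext g
  simp [wsum, finsum_mem_eq_finite_toFinset_sum _ hZ]

lemma charPairing_wsum {Z : Set (G → ℂ)} (hZ : Z ⊆ Irr G) {χ : G → ℂ} (hχ : χ ∈ Irr G) :
    charPairing χ (wsum Z) = if χ ∈ Z then (Fintype.card G : ℂ) * χ 1 else 0 := by
  have hZfin := finite_Irr.subset hZ
  rw [wsum_eq_sum hZfin, map_sum]
  simp only [map_smul, smul_eq_mul]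
  rw [Finset.sum_congr rfl fun φ hφ ↦ by
    rw [charPairing_of_mem_Irr hχ (hZ (hZfin.mem_toFinset.mp hφ)), mul_ite, mul_zero]]
  simp [Finset.sum_ite_eq, mul_comm]

noncomputable def coeffₗ (χ : G → ℂ) : (G → ℂ) →ₗ[ℂ] ℂ :=
  ((Fintype.card G : ℂ) * χ 1)⁻¹ • charPairing χ

lemma coeffₗ_apply (χ a : G → ℂ) : coeffₗ χ a = coeff χ a := by
  simp [coeffₗ, coeff, charPairing_apply, div_eq_inv_mul]

lemma coeff_wsum {Z : Set (G → ℂ)} (hZ : Z ⊆ Irr G) {χ : G → ℂ} (hχ : χ ∈ Irr G) :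
    coeff χ (wsum Z) = if χ ∈ Z then 1 else 0 := by
  rw [← coeffₗ_apply, coeffₗ, LinearMap.smul_apply, charPairing_wsum hZ hχ]
  split_ifs
  · exact inv_mul_cancel₀ (mul_ne_zero (Nat.cast_ne_zero.mpr Fintype.card_ne_zero)
      (apply_one_ne_zero_of_mem_Irr hχ))
  · exact smul_zero _

end Coefficients

lemma IsPartitionOf.mem_iff_eq {α : Type*} {S : Set α} {P : Set (Set α)} (hP : IsPartitionOf S P)
    {p q : Set α} (hp : p ∈ P) (hq : q ∈ P) {a : α} (ha : a ∈ p) : a ∈ q ↔ q = p := by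
  refine ⟨fun haq ↦ ?_, fun h ↦ h ▸ ha⟩
  obtain ⟨r, -, hr⟩ := hP.2 a ((hP.1 p hp).2 ha)
  exact (hr q ⟨hq, haq⟩).trans (hr p ⟨hp, ha⟩).symm

def constOnBlocks (R : Type*) [CommSemiring R] {α : Type*} (K : Set (Set α)) :
    Subalgebra R (α → R) where
  carrier := {f | ∀ k ∈ K, ∀ x ∈ k, ∀ y ∈ k, f x = f y}
  mul_mem' hf hg k hk x hx y hy := by simp only [Pi.mul_apply, hf k hk x hx y hy, hg k hk x hx y hy]
  add_mem' hf hg k hk x hx y hy := by simp only [Pi.add_apply, hf k hk x hx y hy, hg k hk x hx y hy]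
  algebraMap_mem' _ _ _ _ _ _ _ := rfl

lemma finrank_constOnBlocks_le (R : Type*) [Field R] {α : Type*} [Finite α] {K : Set (Set α)}
    (hK : IsPartitionOf Set.univ K) :
    finrank R (Subalgebra.toSubmodule (constOnBlocks R K)) ≤ K.ncard := by
  choose rep hrep using fun k : K ↦ (hK.1 k k.2).1
  let restrict : Subalgebra.toSubmodule (constOnBlocks R K) →ₗ[R] (K → R) :=
    LinearMap.pi fun k ↦ LinearMap.proj (rep k) ∘ₗ Submodule.subtype _
  have hinj : Function.Injective restrict := by
    rintro ⟨f, hf⟩ ⟨f', hf'⟩ hff'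
    refine Subtype.ext (funext fun x ↦ ?_)
    obtain ⟨k, ⟨hk, hx⟩, -⟩ := hK.2 x (Set.mem_univ x)
    calc f x = f (rep ⟨k, hk⟩) := hf k hk x hx _ (hrep ⟨k, hk⟩)
      _ = f' (rep ⟨k, hk⟩) := congrFun hff' ⟨k, hk⟩
      _ = f' x := hf' k hk _ (hrep ⟨k, hk⟩) x hx
  have := Fintype.ofFinite K
  refine (LinearMap.finrank_le_finrank_of_injective hinj).trans_eq ?_
  rw [Module.finrank_fintype_fun_eq_card, ← Nat.card_eq_fintype_card, Nat.card_coe_set_eq]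

section SupercharacterTheory

variable {G : Type} [Group G] [Fintype G] {Y : Set (Set (G → ℂ))} {K : Set (Set G)}

lemma finrank_span_wsum (hY : IsPartitionOf (Irr G) Y) :
    finrank ℂ (Submodule.span ℂ (wsum '' Y)) = Y.ncard := by
  have : Finite Y := (finite_Irr.finite_subsets.subset fun Z hZ ↦ (hY.1 Z hZ).2).to_subtype
  have := Fintype.ofFinite Y
  choose χ hχ using fun Z : Y ↦ (hY.1 Z Z.2).1
  have hli : LinearIndependent ℂ fun Z : Y ↦ wsum (Z : Set (G → ℂ)) := by
    refine .of_pairing (fun Z ↦ coeffₗ (χ Z)) (fun Z ↦ ?_) (fun Z W hZW ↦ ?_)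
    · rw [coeffₗ_apply, coeff_wsum (hY.1 Z Z.2).2 ((hY.1 Z Z.2).2 (hχ Z)), if_pos (hχ Z)]
      exact one_ne_zero
    · rw [coeffₗ_apply, coeff_wsum (hY.1 W W.2).2 ((hY.1 Z Z.2).2 (hχ Z)),
        if_neg fun h ↦ hZW (Subtype.ext ((hY.mem_iff_eq Z.2 W.2 (hχ Z)).mp h).symm)]
  rw [Set.image_eq_range, finrank_span_eq_card hli, ← Nat.card_eq_fintype_card,
    Nat.card_coe_set_eq]

lemma IsSCT.span_wsum_eq (hsct : IsSCT G Y K) :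
    Submodule.span ℂ (wsum '' Y) = Subalgebra.toSubmodule (constOnBlocks ℂ K) := by
  obtain ⟨hY, hK, -, hcard, hconst⟩ := hsct
  have hle : Submodule.span ℂ (wsum '' Y) ≤ Subalgebra.toSubmodule (constOnBlocks ℂ K) := by
    rw [Submodule.span_le]
    rintro _ ⟨Z, hZ, rfl⟩
    exact hconst Z hZ
  refine Submodule.eq_of_le_of_finrank_le hle ?_
  rw [finrank_span_wsum hY, hcard]
  exact finrank_constOnBlocks_le ℂ hK

lemma IsSCT.mem_span_wsum_of_mem_wAlg (hsct : IsSCT G Y K) {𝒳 : Set (Set (G → ℂ))} (h𝒳 : 𝒳 ⊆ Y)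
    {a : G → ℂ} (ha : a ∈ wAlg G 𝒳) : a ∈ Submodule.span ℂ (wsum '' Y) := by
  rw [hsct.span_wsum_eq]
  refine NonUnitalAlgebra.adjoin_le (S := (constOnBlocks ℂ K).toNonUnitalSubalgebra) ?_ ha
  rintro _ ⟨Z, hZ, rfl⟩
  exact hsct.2.2.2.2 Z (h𝒳 hZ)

lemma coeff_eq_of_mem_span_wsum (hY : IsPartitionOf (Irr G) Y) {Z : Set (G → ℂ)} (hZ : Z ∈ Y)
    {χ ψ : G → ℂ} (hχ : χ ∈ Z) (hψ : ψ ∈ Z) {a : G → ℂ}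
    (ha : a ∈ Submodule.span ℂ (wsum '' Y)) : coeff χ a = coeff ψ a := by
  rw [← coeffₗ_apply, ← coeffₗ_apply]
  refine LinearMap.eqOn_span ?_ ha
  rintro _ ⟨W, hW, rfl⟩
  have hWirr := (hY.1 W hW).2
  simp only [coeffₗ_apply, coeff_wsum hWirr ((hY.1 Z hZ).2 hχ),
    coeff_wsum hWirr ((hY.1 Z hZ).2 hψ), hY.mem_iff_eq hZ hW hχ, hY.mem_iff_eq hZ hW hψ]

end SupercharacterTheory

lemma mem_Filt_singleton {G : Type} [Group G] [Fintype G] {X : Set (G → ℂ)} (hX : X ⊆ Irr G)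
    (hXne : X.Nonempty) (hfrel : ∀ χ ∈ X, ∀ ψ ∈ X, frel G {X} χ ψ) : X ∈ Filt G {X} := by
  obtain ⟨χ, hχ⟩ := hXne
  refine ⟨χ, hX hχ, Set.ext fun ψ ↦ ⟨fun hψ ↦ ⟨hX hψ, hfrel χ hχ ψ hψ⟩, fun ⟨hψ, hχψ⟩ ↦ ?_⟩⟩
  have h := hχψ (wsum X) (NonUnitalAlgebra.subset_adjoin ℂ ⟨X, rfl, rfl⟩)
  rw [coeff_wsum hX (hX hχ), coeff_wsum hX hψ, if_pos hχ] at h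
  by_contra hψX
  rw [if_neg hψX] at h
  exact one_ne_zero h

/-- if `(Y, K)` is a supercharacter theory of `G` and `X ∈ Y`, then `X`
is good, i.e. `X` is a member of the filtration `ℱ({X})`. -/
theorem stmt11 (G : Type) [Group G] [Fintype G] (Y : Set (Set (G → ℂ))) (K : Set (Set G))
    (hsct : IsSCT G Y K) (X : Set (G → ℂ)) (hX : X ∈ Y) :
    X ∈ Filt G {X} := by
  have hY := hsct.1
  refine mem_Filt_singleton (hY.1 X hX).2 (hY.1 X hX).1 fun χ hχ ψ hψ a ha ↦ ?_
  have ha' := hsct.mem_span_wsum_of_mem_wAlg (Set.singleton_subset_iff.mpr hX) ha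
  exact coeff_eq_of_mem_span_wsum hY hX hχ hψ ha'
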